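/- arXiv:math/0502423 — 3 statements merged into one kernel-verified Lean document; each statement's English description precedes it below -/
import Mathlib

section
/- Let H be a Hilbert space, k a unit vector in H, and (e_i)_{i∈I} an orthonormal basis of H. For each i let T_i be the rank-one operator T_i h = ⟨h, k⟩ e_i. Then for every a ∈ B(H), the sum over i of T_i a T_i* converges in the weak operator topology to ⟨a k, k⟩ I. -/
open ContinuousLinearMap InnerProductSpace

section RankOne

variable {𝕜 E F G W : Type*} [RCLike 𝕜]
  [SeminormedAddCommGroup E] [NormedSpace 𝕜 E]
  [SeminormedAddCommGroup F] [InnerProductSpace 𝕜 F]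
  [SeminormedAddCommGroup G] [NormedSpace 𝕜 G]
  [SeminormedAddCommGroup W] [InnerProductSpace 𝕜 W]

theorem rankOne_comp_comp_rankOne (x : E) (y : F) (a : G →L[𝕜] F) (z : G) (w : W) :
    rankOne 𝕜 x y ∘L a ∘L rankOne 𝕜 z w = inner 𝕜 y (a z) • rankOne 𝕜 x w := by
  ext v
  simp only [comp_apply, rankOne_apply, map_smul, smul_apply, smul_smul, mul_comm]

end RankOne

theorem HilbertBasis.hasSum_inner_rankOne_self {𝕜 E ι : Type*} [RCLike 𝕜]
    [NormedAddCommGroup E] [InnerProductSpace 𝕜 E] (b : HilbertBasis ι 𝕜 E) (x y : E) :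
    HasSum (fun i => inner 𝕜 x (rankOne 𝕜 (b i) (b i) y)) (inner 𝕜 x y) := by
  simpa only [rankOne_apply, inner_smul_right, mul_comm] using b.hasSum_inner_mul_inner x y

theorem rank_one_sum_WOT_general
    {H : Type*} [NormedAddCommGroup H] [InnerProductSpace ℂ H] [CompleteSpace H]
    {ι : Type*} (e : HilbertBasis ι ℂ H)
    (k : H)
    (T : ι → H →L[ℂ] H)
    (hT : ∀ i (h : H), T i h = (inner ℂ k h : ℂ) • e i) :
    ∀ (a : H →L[ℂ] H) (x y : H),
      HasSum (fun i => (inner ℂ x ((T i ∘L a ∘L ContinuousLinearMap.adjoint (T i)) y) : ℂ))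
        ((inner ℂ k (a k) : ℂ) * (inner ℂ x y : ℂ)) := by
  intro a x y
  obtain rfl : T = fun i => rankOne ℂ (e i) k := funext fun i => ext (hT i)
  simp only [adjoint_rankOne, rankOne_comp_comp_rankOne, smul_apply, inner_smul_right]
  exact (e.hasSum_inner_rankOne_self x y).mul_left _

/-- Let `k` be a unit vector and `(e i)` an orthonormal basis of `H`, and let
`T i` be the rank-one operator `h ↦ ⟨h, k⟩ e i`.  Then for every `a ∈ B(H)` the sum
`∑ i, T i a (T i)*` converges in the weak operator topology to `⟨a k, k⟩ I`. -/
theorem rank_one_sum_WOT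
    {H : Type*} [NormedAddCommGroup H] [InnerProductSpace ℂ H] [CompleteSpace H]
    {ι : Type*} (e : HilbertBasis ι ℂ H)
    (k : H) (hk : ‖k‖ = 1)
    (T : ι → H →L[ℂ] H)
    (hT : ∀ i (h : H), T i h = (inner ℂ k h : ℂ) • e i) :
    ∀ (a : H →L[ℂ] H) (x y : H),
      HasSum (fun i => (inner ℂ x ((T i ∘L a ∘L ContinuousLinearMap.adjoint (T i)) y) : ℂ))
        ((inner ℂ k (a k) : ℂ) * (inner ℂ x y : ℂ)) :=
  rank_one_sum_WOT_general e k T hT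
end

section
/- Let H be a Hilbert space, P a projection, S a coisometry with S*S = P, and define Φ(a) = SaS* and Θ(a) = ⟨ak,k⟩I for a unit vector k with S*k = k. For all a, b ∈ B(H) and h ∈ H, in the Hilbert space H_{Φ,Θ} (the Hausdorff completion of B(H) ⊗ B(H) ⊗ H under ⟨a⊗b⊗h, c⊗d⊗g⟩ = ⟨h, Θ(b*Φ(a*c)d)g⟩), one has the identity a ⊗_Φ b ⊗_Θ h = (aS*bS) ⊗_Φ I ⊗_Θ h; equivalently ⟨a⊗b⊗h − aS*bS⊗I⊗h, a⊗b⊗h − aS*bS⊗I⊗h⟩_{Φ,Θ} = 0. -/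
open ContinuousLinearMap

/-!
Write `x = a S* b S`. Since `S S* = 1`, `Φ(x* c) = S S* b* S a* c S* = b* Φ(a* c)` for every `c`,
so `x ⊗ I ⊗ h` and `a ⊗ b ⊗ h` pair identically with every elementary tensor.
Expanding the self-pairing of their difference, the four terms then cancel in pairs.
-/

theorem conj_star_mul_eq_star_mul_conj {A : Type*} [Monoid A] [StarMul A] {S : A}
    (hS : S * star S = 1) (a b c : A) :
    S * (star (a * star S * b * S) * c) * star S = star b * (S * (star a * c) * star S) := by
  simp only [star_mul, star_star, mul_assoc]
  rw [← mul_assoc S, hS, one_mul]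

theorem example_tensor_identity_general
    {H : Type*} [NormedAddCommGroup H] [InnerProductSpace ℂ H] [CompleteSpace H]
    (S : H →L[ℂ] H)
    (hco : S * ContinuousLinearMap.adjoint S = 1)
    (Θ Φ : (H →L[ℂ] H) → (H →L[ℂ] H))
    (hΦ : ∀ a, Φ a = S * a * ContinuousLinearMap.adjoint S)
    -- the sesquilinear form on `B(H) ⊗ B(H) ⊗ H`
    (F : (H →L[ℂ] H) → (H →L[ℂ] H) → H → (H →L[ℂ] H) → (H →L[ℂ] H) → H → ℂ)
    (hF : ∀ a b h c d g,
      F a b h c d g = inner ℂ h ((Θ (star b * Φ (star a * c) * d)) g)) :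
    ∀ (a b : H →L[ℂ] H) (h : H),
      F a b h a b h
        - F a b h (a * ContinuousLinearMap.adjoint S * b * S) 1 h
        - F (a * ContinuousLinearMap.adjoint S * b * S) 1 h a b h
        + F (a * ContinuousLinearMap.adjoint S * b * S) 1 h
            (a * ContinuousLinearMap.adjoint S * b * S) 1 h = 0 := by
  intro a b h
  rw [← star_eq_adjoint] at hco hΦ ⊢
  have hpair : ∀ c d g, F (a * star S * b * S) 1 h c d g = F a b h c d g := by
    intro c d g
    rw [hF, hF, star_one, one_mul, hΦ, hΦ, conj_star_mul_eq_star_mul_conj hco]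
  rw [hpair, hpair]
  ring

/-- With `Θ(a) = ⟨a k, k⟩ I` and `Φ(a) = S a S*` as in the paper's example, in the
Hilbert space `H_{Φ,Θ}` (Hausdorff completion of `B(H) ⊗ B(H) ⊗ H` under
`⟨a⊗b⊗h, c⊗d⊗g⟩ = ⟨h, Θ(b* Φ(a*c) d) g⟩`) one has
`a ⊗_Φ b ⊗_Θ h = (a S* b S) ⊗_Φ I ⊗_Θ h`, i.e. the difference has zero self-pairing. -/
theorem example_tensor_identity
    {H : Type*} [NormedAddCommGroup H] [InnerProductSpace ℂ H] [CompleteSpace H]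
    (k : H) (hk : ‖k‖ = 1) (P S : H →L[ℂ] H)
    (hco : S * ContinuousLinearMap.adjoint S = 1)
    (hP : ContinuousLinearMap.adjoint S * S = P)
    (hSk : ContinuousLinearMap.adjoint S k = k)
    (Θ Φ : (H →L[ℂ] H) → (H →L[ℂ] H))
    (hΘ : ∀ a, Θ a = (inner ℂ k (a k) : ℂ) • (1 : H →L[ℂ] H))
    (hΦ : ∀ a, Φ a = S * a * ContinuousLinearMap.adjoint S)
    -- the sesquilinear form on `B(H) ⊗ B(H) ⊗ H`
    (F : (H →L[ℂ] H) → (H →L[ℂ] H) → H → (H →L[ℂ] H) → (H →L[ℂ] H) → H → ℂ)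
    (hF : ∀ a b h c d g,
      F a b h c d g = inner ℂ h ((Θ (star b * Φ (star a * c) * d)) g)) :
    ∀ (a b : H →L[ℂ] H) (h : H),
      F a b h a b h
        - F a b h (a * ContinuousLinearMap.adjoint S * b * S) 1 h
        - F (a * ContinuousLinearMap.adjoint S * b * S) 1 h a b h
        + F (a * ContinuousLinearMap.adjoint S * b * S) 1 h
            (a * ContinuousLinearMap.adjoint S * b * S) 1 h = 0 :=
  example_tensor_identity_general S hco Θ Φ hΦ F hF
end

section
/- Let M be a von Neumann algebra on H and let α be a normal *-endomorphism of M, W : H → K an isometry into a Hilbert space K, and β a normal *-endomorphism of a von Neumann algebra R on K such that WW* is coinvariant for β (β(WW*)WW* = β(I)WW*), W*RW = M, and Θ(a) = W*β(WaW*)W for a ∈ M. Then Θ^n(a) = W*β^n(WaW*)W for all n ≥ 1 and a ∈ M (powers of an endomorphic dilation dilate powers of the CP map). -/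
/-!
Let `P = W W*`. Since `W* P = W*` and `P W = W`, the step `Θ^{n+1} a = Θ (Θⁿ a)` reduces to
`W* β(P x P) W = W* β(x) W` for `x = βⁿ(W a W*) ∈ R`. Multiplicativity gives
`β(P x P) = β(P) β(x) β(P)`; coinvariance `β(P) P = β(1) P` and its adjoint `P β(P) = P β(1)`
replace `β(P)` by `β(1)` once compressed by `P`, and `β(1) β(x) β(1) = β(x)`.
-/

open ContinuousLinearMap

theorem Function.iterate_succ_apply_eq_of_eq_comp_on {α γ : Type*} {M : Set α} {R : Set γ}
    {Θ : α → α} {β : γ → γ} {f : γ → α} {g : α → γ}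
    (hΘ : ∀ a ∈ M, Θ a = f (β (g a))) (hΘM : Set.MapsTo Θ M M) (hβR : Set.MapsTo β R R)
    (hgR : Set.MapsTo g M R) (hcompress : ∀ y ∈ R, f (β (g (f y))) = f (β y)) (n : ℕ) :
    ∀ a ∈ M, Θ^[n + 1] a = f (β^[n + 1] (g a)) := by
  induction n with
  | zero => exact hΘ
  | succ n ih =>
    intro a ha
    rw [Function.iterate_succ_apply', hΘ _ (hΘM.iterate (n + 1) ha), ih a ha,
      hcompress _ (hβR.iterate (n + 1) (hgR ha)), ← Function.iterate_succ_apply' β (n + 1)]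

section Coinvariant

variable {A : Type*} [Monoid A] [StarMul A] {R : Submonoid A} {β : A → A} {p : A}

theorem mul_map_eq_mul_map_one_of_coinvariant (hp : IsSelfAdjoint p) (hpR : p ∈ R)
    (hβstar : ∀ b ∈ R, β (star b) = star (β b)) (hcoinv : β p * p = β 1 * p) :
    p * β p = p * β 1 := by
  have hβp : IsSelfAdjoint (β p) := by
    rw [IsSelfAdjoint, ← hβstar p hpR, hp.star_eq]
  have hβ1 : IsSelfAdjoint (β 1) := by
    rw [IsSelfAdjoint, ← hβstar 1 R.one_mem, star_one]
  simpa only [star_mul, hp.star_eq, hβp.star_eq, hβ1.star_eq] using congrArg star hcoinv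

theorem mul_map_mul_mul_mul_eq_of_coinvariant (hp : IsSelfAdjoint p) (hpR : p ∈ R)
    (hβmul : ∀ b ∈ R, ∀ c ∈ R, β (b * c) = β b * β c)
    (hβstar : ∀ b ∈ R, β (star b) = star (β b)) (hcoinv : β p * p = β 1 * p)
    {c : A} (hc : c ∈ R) :
    p * β (p * c * p) * p = p * β c * p := by
  have hleft := mul_map_eq_mul_map_one_of_coinvariant hp hpR hβstar hcoinv
  have hsplit : β (p * c * p) = β p * β c * β p := by
    rw [hβmul _ (R.mul_mem hpR hc) _ hpR, hβmul _ hpR _ hc]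
  have hunit : β c = β 1 * β c * β 1 := by
    rw [← hβmul _ R.one_mem _ hc, ← hβmul _ (R.mul_mem R.one_mem hc) _ R.one_mem,
      one_mul, mul_one]
  calc p * β (p * c * p) * p
      = p * β p * β c * (β p * p) := by rw [hsplit]; simp only [mul_assoc]
    _ = p * β 1 * β c * (β 1 * p) := by rw [hleft, hcoinv]
    _ = p * β c * p := by
      conv_rhs => rw [hunit]
      simp only [mul_assoc]

end Coinvariant

namespace ContinuousLinearMap

variable {H K : Type*} [NormedAddCommGroup H] [InnerProductSpace ℂ H] [CompleteSpace H]
  [NormedAddCommGroup K] [InnerProductSpace ℂ K] [CompleteSpace K]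

theorem isSelfAdjoint_comp_adjoint (W : H →L[ℂ] K) : IsSelfAdjoint (W ∘L adjoint W) := by
  simpa only [one_def, id_comp] using (IsSelfAdjoint.one (H →L[ℂ] H)).conj_adjoint W

theorem adjoint_comp_conj_comp_eq_of_isometry {W : H →L[ℂ] K} (hW : adjoint W ∘L W = 1)
    (x : K →L[ℂ] K) :
    adjoint W ∘L (W ∘L adjoint W * x * (W ∘L adjoint W)) ∘L W = adjoint W ∘L x ∘L W := by
  simp only [mul_def, ← comp_assoc, hW, one_def, id_comp]
  simp only [comp_assoc, hW, one_def, comp_id]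

end ContinuousLinearMap

theorem endomorphic_dilation_powers_general
    {H K : Type*} [NormedAddCommGroup H] [InnerProductSpace ℂ H] [CompleteSpace H]
    [NormedAddCommGroup K] [InnerProductSpace ℂ K] [CompleteSpace K]
    (M : VonNeumannAlgebra H) (R : VonNeumannAlgebra K)
    (W : H →L[ℂ] K) (hW : ContinuousLinearMap.adjoint W ∘L W = 1)
    (β : (K →L[ℂ] K) → (K →L[ℂ] K))
    (hβR : ∀ b ∈ R, β b ∈ R)
    (hβmul : ∀ b ∈ R, ∀ c ∈ R, β (b * c) = β b * β c)
    (hβstar : ∀ b ∈ R, β (star b) = star (β b))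
    -- coinvariance of `W W*` under `β`
    (hcoinv : β (W ∘L ContinuousLinearMap.adjoint W) * (W ∘L ContinuousLinearMap.adjoint W)
      = β 1 * (W ∘L ContinuousLinearMap.adjoint W))
    (hWWR : (W ∘L ContinuousLinearMap.adjoint W) ∈ R)
    (hMR : ∀ a ∈ M, (W ∘L a ∘L ContinuousLinearMap.adjoint W) ∈ R)
    (Θ : (H →L[ℂ] H) → (H →L[ℂ] H))
    (hΘ : ∀ a ∈ M, Θ a = ContinuousLinearMap.adjoint W ∘L
      β (W ∘L a ∘L ContinuousLinearMap.adjoint W) ∘L W)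
    (hΘM : ∀ a ∈ M, Θ a ∈ M) :
    ∀ n : ℕ, 1 ≤ n → ∀ a ∈ M,
      Θ^[n] a = ContinuousLinearMap.adjoint W ∘L
        β^[n] (W ∘L a ∘L ContinuousLinearMap.adjoint W) ∘L W := by
  intro n hn
  obtain ⟨n, rfl⟩ := Nat.exists_eq_add_of_le' hn
  refine Function.iterate_succ_apply_eq_of_eq_comp_on (f := fun b => adjoint W ∘L b ∘L W)
    (g := fun a => W ∘L a ∘L adjoint W) hΘ hΘM hβR hMR (fun y hy => ?_) n
  have hconj := mul_map_mul_mul_mul_eq_of_coinvariant (R := R.toSubmonoid)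
    (isSelfAdjoint_comp_adjoint W) hWWR hβmul hβstar hcoinv hy
  calc adjoint W ∘L β (W ∘L (adjoint W ∘L y ∘L W) ∘L adjoint W) ∘L W
      = adjoint W ∘L (W ∘L adjoint W * β (W ∘L adjoint W * y * (W ∘L adjoint W))
          * (W ∘L adjoint W)) ∘L W := by
        rw [adjoint_comp_conj_comp_eq_of_isometry hW]; rfl
    _ = adjoint W ∘L β y ∘L W := by
        rw [hconj, adjoint_comp_conj_comp_eq_of_isometry hW]

/-- If `(K, R, β, W)` is an endomorphic dilation of the CP map `Θ` on `M` (so `WW*` is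
coinvariant for `β`, `W*RW = M`, and `Θ(a) = W* β(W a W*) W`), then
`Θⁿ(a) = W* βⁿ(W a W*) W` for all `n ≥ 1` and `a ∈ M`. -/
theorem endomorphic_dilation_powers
    {H K : Type*} [NormedAddCommGroup H] [InnerProductSpace ℂ H] [CompleteSpace H]
    [NormedAddCommGroup K] [InnerProductSpace ℂ K] [CompleteSpace K]
    (M : VonNeumannAlgebra H) (R : VonNeumannAlgebra K)
    (W : H →L[ℂ] K) (hW : ContinuousLinearMap.adjoint W ∘L W = 1)
    (β : (K →L[ℂ] K) → (K →L[ℂ] K))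
    (hβR : ∀ b ∈ R, β b ∈ R)
    (hβadd : ∀ b c, β (b + c) = β b + β c)
    (hβmul : ∀ b ∈ R, ∀ c ∈ R, β (b * c) = β b * β c)
    (hβstar : ∀ b ∈ R, β (star b) = star (β b))
    -- coinvariance of `W W*` under `β`
    (hcoinv : β (W ∘L ContinuousLinearMap.adjoint W) * (W ∘L ContinuousLinearMap.adjoint W)
      = β 1 * (W ∘L ContinuousLinearMap.adjoint W))
    (hWWR : (W ∘L ContinuousLinearMap.adjoint W) ∈ R)
    -- `W* R W = M`
    (hRM : ∀ b ∈ R, (ContinuousLinearMap.adjoint W ∘L b ∘L W) ∈ M)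
    (hMR : ∀ a ∈ M, (W ∘L a ∘L ContinuousLinearMap.adjoint W) ∈ R)
    (Θ : (H →L[ℂ] H) → (H →L[ℂ] H))
    (hΘ : ∀ a ∈ M, Θ a = ContinuousLinearMap.adjoint W ∘L
      β (W ∘L a ∘L ContinuousLinearMap.adjoint W) ∘L W)
    (hΘM : ∀ a ∈ M, Θ a ∈ M) :
    ∀ n : ℕ, 1 ≤ n → ∀ a ∈ M,
      Θ^[n] a = ContinuousLinearMap.adjoint W ∘L
        β^[n] (W ∘L a ∘L ContinuousLinearMap.adjoint W) ∘L W :=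
  endomorphic_dilation_powers_general M R W hW β hβR hβmul hβstar hcoinv hWWR hMR Θ hΘ hΘM
end
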